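/- Let S = (a_1, ..., a_n) be a signature of Q_n that reduces over a proper nonempty subset R of [n], let T be an upright spanning tree of Q_n with signature S, and let X be a nonempty vertex of Q_n. Then ψ_T(X) ∈ R if and only if X ⊆ R. -/

import Mathlib

open SimpleGraph

/-- The `n`-cube: vertices are the subsets of `[n]` (modelled as `Finset (Fin n)`),
with an edge between `X` and `Y` iff their symmetric difference is a singleton. -/
def cube (n : ℕ) : SimpleGraph (Finset (Fin n)) where
  Adj X Y := (symmDiff X Y).card = 1
  symm := by
    constructor
    intro X Y h
    rwa [symmDiff_comm]
  loopless := by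
    constructor
    intro X h
    simp [symmDiff_self, Finset.bot_eq_empty] at h

/-- `T` is a spanning tree of `G` (both graphs on the same vertex set). -/
def IsSpanningTreeOf {V : Type*} (T G : SimpleGraph V) : Prop :=
  T ≤ G ∧ T.IsTree

/-- The edge `e` of the `n`-cube is in direction `i`. -/
def edgeInDir {n : ℕ} (i : Fin n) (e : Sym2 (Finset (Fin n))) : Prop :=
  ∃ X : Finset (Fin n), e = s(X, symmDiff X {i})

/-- The number of edges of `T` in direction `i`. -/
noncomputable def dirCount {n : ℕ} (T : SimpleGraph (Finset (Fin n))) (i : Fin n) : ℕ :=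
  {e | e ∈ T.edgeSet ∧ edgeInDir i e}.ncard

/-- `a` is the signature of the tree `T`. -/
def HasSig {n : ℕ} (T : SimpleGraph (Finset (Fin n))) (a : Fin n → ℕ) : Prop :=
  ∀ i, dirCount T i = a i

/-- `a` is a signature of `Q_n`, i.e. the signature of some spanning tree of the `n`-cube. -/
def IsSignature (n : ℕ) (a : Fin n → ℕ) : Prop :=
  ∃ T, IsSpanningTreeOf T (cube n) ∧ HasSig T a

/-- A section of the set of nonempty subsets of `[n]`. -/
def IsSection {n : ℕ} (ψ : Finset (Fin n) → Fin n) : Prop :=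
  ∀ X : Finset (Fin n), X.Nonempty → ψ X ∈ X

/-- The number of nonempty subsets on which the section `ψ` takes the value `i`. -/
noncomputable def secCount {n : ℕ} (ψ : Finset (Fin n) → Fin n) (i : Fin n) : ℕ :=
  {X : Finset (Fin n) | X.Nonempty ∧ ψ X = i}.ncard

/-- The tuple `a` reduces over `R` : `Σ_{i ∈ R} a i = 2^|R| - 1`. -/
def ReducesOver {n : ℕ} (a : Fin n → ℕ) (R : Finset (Fin n)) : Prop :=
  ∑ i ∈ R, a i = 2 ^ R.card - 1

/-- `a` is reducible: it reduces over some proper nonempty subset of `[n]`. -/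
def IsReducibleSig {n : ℕ} (a : Fin n → ℕ) : Prop :=
  ∃ R : Finset (Fin n), R.Nonempty ∧ R ≠ Finset.univ ∧ ReducesOver a R

/-- `a` is irreducible. -/
def IsIrreducibleSig {n : ℕ} (a : Fin n → ℕ) : Prop := ¬ IsReducibleSig a

/-- `T` is upright: every vertex `X` is at distance `|X|` in `T` from the root `∅`. -/
def IsUpright {n : ℕ} (T : SimpleGraph (Finset (Fin n))) : Prop :=
  ∀ X : Finset (Fin n), T.dist X ∅ = X.card

/-- `ψ` is the section associated to the upright tree `T`: for each nonempty `X`,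
`ψ X ∈ X` and `X - {ψ X}` is the next vertex after `X` on the path in `T` from `X` to `∅`. -/
def IsTreeSection {n : ℕ} (T : SimpleGraph (Finset (Fin n))) (ψ : Finset (Fin n) → Fin n) : Prop :=
  ∀ X : Finset (Fin n), X.Nonempty → ψ X ∈ X ∧ T.Adj X (X.erase (ψ X))

/-- The minimum of `Σ_{i ∈ K} a i` over the sets `K` of `k` directions. -/
noncomputable def minSum {n : ℕ} (a : Fin n → ℕ) (k : ℕ) : ℕ :=
  sInf {m : ℕ | ∃ K : Finset (Fin n), K.card = k ∧ ∑ i ∈ K, a i = m}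

/-- The excess of `a` at `k`. -/
noncomputable def excess {n : ℕ} (a : Fin n → ℕ) (k : ℕ) : ℤ :=
  (minSum a k : ℤ) - (2 ^ k - 1)

/-- The result of sliding the edge `e` in direction `i`. -/
def slideEdge {n : ℕ} (i : Fin n) (e : Sym2 (Finset (Fin n))) : Sym2 (Finset (Fin n)) :=
  Sym2.map (fun X => symmDiff X {i}) e

/-- The edge `e` of the spanning tree `T` of `Q_n` is `i`-slidable. -/
def Slidable (n : ℕ) (T : SimpleGraph (Finset (Fin n))) (i : Fin n)
    (e : Sym2 (Finset (Fin n))) : Prop :=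
  e ∈ T.edgeSet ∧
    IsSpanningTreeOf (SimpleGraph.fromEdgeSet ((T.edgeSet \ {e}) ∪ {slideEdge i e})) (cube n)

/-- The edge set `E` is (the edge set of) a spanning tree of the subgraph of the
`n`-cube induced on the vertex set `s`. -/
def IsSpanningTreeOn (n : ℕ) (s : Set (Finset (Fin n))) (E : Set (Sym2 (Finset (Fin n)))) : Prop :=
  E ⊆ (cube n).edgeSet ∧ (∀ e ∈ E, ∀ v ∈ e, v ∈ s) ∧
    ((SimpleGraph.fromEdgeSet E).induce s).IsTree

/-- The edges of `T` with both endpoints in `s`. -/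
def edgesWithin {n : ℕ} (s : Set (Finset (Fin n))) (T : SimpleGraph (Finset (Fin n))) :
    Set (Sym2 (Finset (Fin n))) :=
  {e | e ∈ T.edgeSet ∧ ∀ v ∈ e, v ∈ s}

/-- The edge `e` of the tree with edge set `E`, spanning the subgraph of the `n`-cube
induced on `s`, is `i`-slidable. -/
def SlidableOn (n : ℕ) (s : Set (Finset (Fin n))) (E : Set (Sym2 (Finset (Fin n))))
    (i : Fin n) (e : Sym2 (Finset (Fin n))) : Prop :=
  e ∈ E ∧ IsSpanningTreeOn n s ((E \ {e}) ∪ {slideEdge i e})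

/-- The number of edges of `T` in direction `i` with both endpoints in `s`. -/
noncomputable def dirCountOn {n : ℕ} (s : Set (Finset (Fin n)))
    (T : SimpleGraph (Finset (Fin n))) (i : Fin n) : ℕ :=
  {e | e ∈ T.edgeSet ∧ edgeInDir i e ∧ ∀ v ∈ e, v ∈ s}.ncard

/-- `T'` is a spanning tree of the `n`-cube obtained from the spanning tree `T` by a
single edge slide. -/
def SlideStep (n : ℕ) (T T' : SimpleGraph (Finset (Fin n))) : Prop :=
  IsSpanningTreeOf T (cube n) ∧ IsSpanningTreeOf T' (cube n) ∧
    ∃ (i : Fin n) (e : Sym2 (Finset (Fin n))), e ∈ T.edgeSet ∧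
      T' = SimpleGraph.fromEdgeSet ((T.edgeSet \ {e}) ∪ {slideEdge i e})

/-- The trees `T` and `T'` are related by a single edge slide. -/
def SlideAdj (n : ℕ) (T T' : SimpleGraph (Finset (Fin n))) : Prop :=
  T ≠ T' ∧ ∃ (i : Fin n) (e : Sym2 (Finset (Fin n))),
    (e ∈ T.edgeSet ∧ T' = SimpleGraph.fromEdgeSet ((T.edgeSet \ {e}) ∪ {slideEdge i e})) ∨
    (e ∈ T'.edgeSet ∧ T = SimpleGraph.fromEdgeSet ((T'.edgeSet \ {e}) ∪ {slideEdge i e}))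

/-- The spanning trees of the `n`-cube. -/
def SpanningTrees (n : ℕ) := {T : SimpleGraph (Finset (Fin n)) // IsSpanningTreeOf T (cube n)}

/-- The edge slide graph `E(n)` of the `n`-cube. -/
def eslide (n : ℕ) : SimpleGraph (SpanningTrees n) where
  Adj T T' := SlideAdj n T.1 T'.1
  symm := by
    constructor
    rintro T T' ⟨hne, i, e, h⟩
    exact ⟨hne.symm, i, e, h.symm⟩
  loopless := by
    constructor
    rintro T ⟨hne, -⟩
    exact hne rfl

/-- The projection `π_R(T)` of `T` to `Q_R`: a graph on the subsets of `R`, with `A`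
adjacent to `B` iff some edge of `T` projects to `{A, B}`. -/
def projTree (n : ℕ) (R : Finset (Fin n)) (T : SimpleGraph (Finset (Fin n))) :
    SimpleGraph ↥{W : Finset (Fin n) | W ⊆ R} where
  Adj A B := A.1 ≠ B.1 ∧ ∃ U V : Finset (Fin n), T.Adj U V ∧ U ∩ R = A.1 ∧ V ∩ R = B.1
  symm := by
    constructor
    rintro A B ⟨hne, U, V, hUV, hU, hV⟩
    exact ⟨hne.symm, V, U, hUV.symm, hV, hU⟩
  loopless := by
    constructor
    rintro A ⟨hne, -⟩
    exact hne rfl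

/-- The projected edge set `π_R(T)`: images under `π_R` of the edges of `T` in
directions belonging to `R`. -/
def projEdges {n : ℕ} (R : Finset (Fin n)) (T : SimpleGraph (Finset (Fin n))) :
    Set (Sym2 (Finset (Fin n))) :=
  {f | ∃ e ∈ T.edgeSet, (∃ i ∈ R, edgeInDir i e) ∧ f = Sym2.map (· ∩ R) e}

/-- The decomposition `T ↦ (F_T, (T(R,X))_{X ⊆ R})` of a tree reducing over `R`. -/
def decompose (n : ℕ) (R : Finset (Fin n)) (T : SimpleGraph (Finset (Fin n))) :
    Set (Sym2 (Finset (Fin n))) ×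
      ((X : Finset (Fin n)) → X ⊆ R → SimpleGraph ↥{W : Finset (Fin n) | W ∩ R = X}) :=
  ⟨{e | e ∈ T.edgeSet ∧ ∃ i ∈ R, edgeInDir i e},
   fun X _ => T.induce {W : Finset (Fin n) | W ∩ R = X}⟩

/-- `s` is the least index such that `ε_k(a) = 0` for all `s ≤ k ≤ n`; i.e. the
entries of (an ordered) `a` with index `≤ s` form the unsaturated part of `a`. -/
def UnsatIndex (n : ℕ) (a : Fin n → ℕ) (s : ℕ) : Prop :=
  (∀ k, s ≤ k → k ≤ n → excess a k = 0) ∧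
    ∀ s' < s, ¬ (∀ k, s' ≤ k → k ≤ n → excess a k = 0)

/-- The restriction of `a` to its first `s` entries is reducible (as a tuple of length `s`). -/
def ReducibleBelow {n : ℕ} (a : Fin n → ℕ) (s : ℕ) : Prop :=
  ∃ R : Finset (Fin n), R.Nonempty ∧ (∀ i ∈ R, (i : ℕ) < s) ∧ R.card < s ∧
    ∑ i ∈ R, a i = 2 ^ R.card - 1

/-- `a` is strictly reducible: it is reducible and its unsaturated part is reducible. -/
def StrictlyReducible (n : ℕ) (a : Fin n → ℕ) : Prop :=
  IsReducibleSig a ∧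
    ∃ (σ : Equiv.Perm (Fin n)) (s : ℕ), Monotone (a ∘ σ) ∧
      UnsatIndex n (a ∘ σ) s ∧ ReducibleBelow (a ∘ σ) s

/-!
Every nonempty `X` labels the tree edge `{X, X - ψ X}`, which has direction `ψ X`. These
labels are distinct and `T` has `2 ^ n - 1` edges, so each edge is labelled exactly once and
`a i` counts the nonempty `X` with `ψ X = i`. Hence `Σ_{i ∈ R} a i` counts the nonempty `X`
with `ψ X ∈ R`; these include the `2 ^ |R| - 1` nonempty subsets of `R`, and reduction over `R`
says there are no others.
-/

open Finset

lemma symmDiff_erase_self {α : Type*} [DecidableEq α] {X : Finset α} {j : α} (hj : j ∈ X) :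
    symmDiff X (X.erase j) = {j} := by
  ext k
  by_cases hk : k = j <;> simp [mem_symmDiff, hk, hj]

lemma card_filter_nonempty_subset {α : Type*} [Fintype α] [DecidableEq α] (R : Finset α) :
    #{X : Finset α | X.Nonempty ∧ X ⊆ R} = 2 ^ #R - 1 := by
  have hpowerset : ({X | X.Nonempty ∧ X ⊆ R} : Finset (Finset α)) = R.powerset.erase ∅ := by
    ext X
    simp [nonempty_iff_ne_empty]
  rw [hpowerset, card_erase_of_mem (empty_mem_powerset R), card_powerset]

lemma ncard_setOf_nonempty {α : Type*} [Fintype α] :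
    {X : Finset α | X.Nonempty}.ncard = 2 ^ Fintype.card α - 1 := by
  classical
  rw [← card_univ, ← card_filter_nonempty_subset, ← Set.ncard_coe_finset]
  simp

lemma secCount_eq_card_filter {n : ℕ} (ψ : Finset (Fin n) → Fin n) (i : Fin n) :
    secCount ψ i = #{X | X.Nonempty ∧ ψ X = i} := by
  rw [secCount, ← Set.ncard_coe_finset, coe_filter]
  simp only [mem_univ, true_and]

lemma sum_secCount_eq_card_filter {n : ℕ} (ψ : Finset (Fin n) → Fin n) (R : Finset (Fin n)) :
    ∑ i ∈ R, secCount ψ i = #{X | X.Nonempty ∧ ψ X ∈ R} := by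
  rw [card_eq_sum_card_fiberwise (f := ψ) (t := R) fun X hX => (mem_filter.1 hX).2.2]
  refine sum_congr rfl fun i hi => ?_
  rw [secCount_eq_card_filter, filter_filter]
  congr 1
  exact filter_congr fun X _ =>
    ⟨fun ⟨hX, hXi⟩ => ⟨⟨hX, hXi ▸ hi⟩, hXi⟩, fun h => ⟨h.1.1, h.2⟩⟩

lemma IsSection.mem_iff_subset_of_sum_secCount_eq {n : ℕ} {ψ : Finset (Fin n) → Fin n}
    (hψ : IsSection ψ) {R : Finset (Fin n)} (hR : ∑ i ∈ R, secCount ψ i = 2 ^ #R - 1)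
    {X : Finset (Fin n)} (hX : X.Nonempty) : ψ X ∈ R ↔ X ⊆ R := by
  have hsub : ({X | X.Nonempty ∧ X ⊆ R} : Finset (Finset (Fin n))) ⊆
      ({X | X.Nonempty ∧ ψ X ∈ R} : Finset (Finset (Fin n))) :=
    monotone_filter_right _ fun X _ ⟨hX, hXR⟩ => ⟨hX, hXR (hψ X hX)⟩
  have heq := eq_of_subset_of_card_le hsub <| by
    rw [← sum_secCount_eq_card_filter, hR, card_filter_nonempty_subset]
  refine ⟨fun h => ?_, fun h => h (hψ X hX)⟩
  have hXmem : X ∈ ({X | X.Nonempty ∧ ψ X ∈ R} : Finset (Finset (Fin n))) :=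
    mem_filter.2 ⟨mem_univ _, hX, h⟩
  exact (mem_filter.1 (heq ▸ hXmem)).2.2

def sectionEdge {n : ℕ} (ψ : Finset (Fin n) → Fin n) (X : Finset (Fin n)) :
    Sym2 (Finset (Fin n)) :=
  s(X, X.erase (ψ X))

lemma IsSection.injOn_sectionEdge {n : ℕ} {ψ : Finset (Fin n) → Fin n} (hψ : IsSection ψ) :
    Set.InjOn (sectionEdge ψ) {X | X.Nonempty} := by
  intro X hX Y hY h
  rcases Sym2.eq_iff.1 h with ⟨hXY, -⟩ | ⟨hXY, hYX⟩
  · exact hXY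
  · have hcX := card_erase_of_mem (hψ X hX)
    have hcY := card_erase_of_mem (hψ Y hY)
    rw [← hXY] at hcY
    rw [hYX] at hcX
    have := hX.card_pos
    omega

lemma edgeInDir_mk_iff {n : ℕ} (i : Fin n) (A B : Finset (Fin n)) :
    edgeInDir i s(A, B) ↔ symmDiff A B = {i} := by
  constructor
  · rintro ⟨Y, hY⟩
    rcases Sym2.eq_iff.1 hY with ⟨rfl, rfl⟩ | ⟨rfl, rfl⟩
    · exact symmDiff_symmDiff_cancel_left _ _
    · rw [symmDiff_comm]
      exact symmDiff_symmDiff_cancel_left _ _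
  · intro h
    exact ⟨A, by rw [← h, symmDiff_symmDiff_cancel_left]⟩

lemma edgeInDir_sectionEdge_iff {n : ℕ} {ψ : Finset (Fin n) → Fin n} {X : Finset (Fin n)}
    (hX : ψ X ∈ X) (i : Fin n) : edgeInDir i (sectionEdge ψ X) ↔ ψ X = i := by
  rw [sectionEdge, edgeInDir_mk_iff, symmDiff_erase_self hX, singleton_inj]

lemma IsTreeSection.isSection {n : ℕ} {T : SimpleGraph (Finset (Fin n))}
    {ψ : Finset (Fin n) → Fin n} (hψ : IsTreeSection T ψ) : IsSection ψ :=
  fun X hX => (hψ X hX).1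

lemma IsTreeSection.edgeSet_eq_image {n : ℕ} {T : SimpleGraph (Finset (Fin n))}
    {ψ : Finset (Fin n) → Fin n} (hψ : IsTreeSection T ψ) (hT : T.IsTree) :
    T.edgeSet = sectionEdge ψ '' {X | X.Nonempty} := by
  classical
  refine (Set.eq_of_subset_of_ncard_le ?_ ?_ (Set.toFinite _)).symm
  · rintro _ ⟨X, hX, rfl⟩
    exact (hψ X hX).2
  · have hcard := hT.card_edgeFinset
    rw [hψ.isSection.injOn_sectionEdge.ncard_image, ncard_setOf_nonempty, ← coe_edgeFinset,
      Set.ncard_coe_finset]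
    simp only [Fintype.card_finset, Fintype.card_fin] at hcard ⊢
    omega

lemma IsTreeSection.dirCount_eq_secCount {n : ℕ} {T : SimpleGraph (Finset (Fin n))}
    {ψ : Finset (Fin n) → Fin n} (hψ : IsTreeSection T ψ) (hT : T.IsTree) (i : Fin n) :
    dirCount T i = secCount ψ i := by
  have hedges : {e | e ∈ T.edgeSet ∧ edgeInDir i e} =
      sectionEdge ψ '' {X | X.Nonempty ∧ ψ X = i} := by
    rw [hψ.edgeSet_eq_image hT]
    ext e
    constructor
    · rintro ⟨⟨X, hX, rfl⟩, hi⟩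
      exact ⟨X, ⟨hX, (edgeInDir_sectionEdge_iff (hψ X hX).1 i).1 hi⟩, rfl⟩
    · rintro ⟨X, ⟨hX, hi⟩, rfl⟩
      exact ⟨⟨X, hX, rfl⟩, (edgeInDir_sectionEdge_iff (hψ X hX).1 i).2 hi⟩
  rw [dirCount, hedges, (hψ.isSection.injOn_sectionEdge.mono fun X hX => hX.1).ncard_image,
    secCount]

theorem stmt3_general (n : ℕ) (a : Fin n → ℕ) (R : Finset (Fin n))
    (hred : ReducesOver a R)
    (T : SimpleGraph (Finset (Fin n))) (hT : IsSpanningTreeOf T (cube n))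
    (hTsig : HasSig T a)
    (ψ : Finset (Fin n) → Fin n) (hψ : IsTreeSection T ψ)
    (X : Finset (Fin n)) (hX : X.Nonempty) :
    ψ X ∈ R ↔ X ⊆ R := by
  refine hψ.isSection.mem_iff_subset_of_sum_secCount_eq ?_ hX
  rw [← hred]
  exact sum_congr rfl fun i _ => by rw [← hTsig i, hψ.dirCount_eq_secCount hT.2]

/-- Lemma: reducibility constrains upright trees. If the signature of
the upright tree `T` reduces over the proper nonempty set `R`, then `ψ_T(X) ∈ R ↔ X ⊆ R`. -/
theorem stmt3 (n : ℕ) (a : Fin n → ℕ) (R : Finset (Fin n))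
    (hR1 : R.Nonempty) (hR2 : R ≠ Finset.univ) (hred : ReducesOver a R)
    (T : SimpleGraph (Finset (Fin n))) (hT : IsSpanningTreeOf T (cube n))
    (hup : IsUpright T) (hTsig : HasSig T a)
    (ψ : Finset (Fin n) → Fin n) (hψ : IsTreeSection T ψ)
    (X : Finset (Fin n)) (hX : X.Nonempty) :
    ψ X ∈ R ↔ X ⊆ R :=
  stmt3_general n a R hred T hT hTsig ψ hψ X hX
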